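/- arXiv:2601.13170 — 2 statements merged into one kernel-verified Lean document; each statement's English description precedes it below -/
import Mathlib

section
/- Let (W(t), M(t)) be a solution of the synaptic ODE with timescale τ = 1/2 and initial condition (W₀, M₀) ∈ O. Then (W(t), M(t)) ∈ O for all t ≥ 0; that is, the set O of orthonormal neural filters is forward invariant under the flow. -/
/-!
Along the flow with `τ = 1/2`, the defect `H = WWᵀ - M²` satisfies the linear equation
`H' = -4H`: the terms `M⁻¹WAWᵀ` and `WAWᵀM⁻¹` produced by differentiating `WWᵀ` and `M²`
cancel exactly, because `A` and `M` are symmetric. As `H(0) = 0`, Grönwall gives `H ≡ 0`, and for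
invertible `M` the condition `M⁻¹WWᵀM⁻¹ = I` is just `WWᵀ = M²`.
-/

open Matrix Filter
open scoped Matrix

attribute [local instance] Matrix.frobeniusNormedAddCommGroup Matrix.frobeniusNormedSpace

/-- A solution of the synaptic ODE with timescale `τ` on `[0, ∞)`:
a continuously differentiable curve `t ↦ (W t, M t)` staying in the domain `D`
(i.e. `M t` symmetric positive definite) satisfying
`(1/2)·dW/dt = M⁻¹WA − W` and `τ·dM/dt = M⁻¹WAWᵀM⁻¹ − M`. -/
def IsSynSol {k n : ℕ} (A : Matrix (Fin n) (Fin n) ℝ) (τ : ℝ)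
    (W : ℝ → Matrix (Fin k) (Fin n) ℝ) (M : ℝ → Matrix (Fin k) (Fin k) ℝ) : Prop :=
  ∀ t : ℝ, 0 ≤ t →
    (M t).PosDef ∧
    HasDerivWithinAt W ((2 : ℝ) • ((M t)⁻¹ * W t * A - W t)) (Set.Ici 0) t ∧
    HasDerivWithinAt M (τ⁻¹ • ((M t)⁻¹ * W t * A * (W t)ᵀ * (M t)⁻¹ - M t)) (Set.Ici 0) t

section MatrixCalculus

variable {l m p : Type*} [Fintype l] [Fintype m] [Fintype p]
  {f : ℝ → Matrix l m ℝ} {g : ℝ → Matrix m p ℝ} {f' : Matrix l m ℝ} {g' : Matrix m p ℝ}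
  {s : Set ℝ} {t : ℝ}

theorem HasDerivWithinAt.matrix_mul (hf : HasDerivWithinAt f f' s t)
    (hg : HasDerivWithinAt g g' s t) :
    HasDerivWithinAt (fun u => f u * g u) (f t * g' + f' * g t) s t :=
  (mulLinearMap ℝ : Matrix l m ℝ →ₗ[ℝ] Matrix m p ℝ →ₗ[ℝ] Matrix l p ℝ)
    |>.toContinuousBilinearMap.hasDerivWithinAt_of_bilinear hf hg

theorem HasDerivWithinAt.matrix_transpose (hf : HasDerivWithinAt f f' s t) :
    HasDerivWithinAt (fun u => (f u)ᵀ) f'ᵀ s t :=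
  (Matrix.transposeLinearEquiv l m ℝ ℝ).toLinearMap.toContinuousLinearMap.hasFDerivAt
    |>.comp_hasDerivWithinAt t hf

end MatrixCalculus

theorem eq_zero_of_hasDerivWithinAt_smul_self {E : Type*} [NormedAddCommGroup E]
    [NormedSpace ℝ E] {f : ℝ → E} {c : ℝ}
    (hf : ∀ t, 0 ≤ t → HasDerivWithinAt f (c • f t) (Set.Ici 0) t) (h₀ : f 0 = 0) :
    ∀ t, 0 ≤ t → f t = 0 := fun T hT =>
  eq_zero_of_abs_deriv_le_mul_abs_self_of_eq_zero_right (K := ‖c‖)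
    (fun x hx => (hf x hx.1).continuousWithinAt.mono Set.Icc_subset_Ici_self)
    (fun x hx => (hf x hx.1).mono (Set.Ici_subset_Ici.2 hx.1)) h₀
    (fun x _ => (norm_smul c (f x)).le) T ⟨hT, le_rfl⟩

theorem Matrix.inv_mul_mul_inv_eq_one_iff {n α : Type*} [Fintype n] [DecidableEq n] [CommRing α]
    {M X : Matrix n n α} (hM : IsUnit M.det) : M⁻¹ * X * M⁻¹ = 1 ↔ X = M * M := by
  constructor
  · intro h
    calc X = M * (M⁻¹ * X * M⁻¹) * M := by
          simp only [Matrix.mul_assoc, Matrix.nonsing_inv_mul _ hM, Matrix.mul_one,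
            Matrix.mul_nonsing_inv_cancel_left _ _ hM]
      _ = M * M := by rw [h, Matrix.mul_one]
  · rintro rfl
    rw [Matrix.nonsing_inv_mul_cancel_left _ _ hM, Matrix.mul_nonsing_inv _ hM]

theorem synaptic_deriv_mul_transpose_sub_mul_self {k n : Type*} [Fintype k] [DecidableEq k]
    [Fintype n]
    {A : Matrix n n ℝ} (hA : A.IsSymm) (W : Matrix k n ℝ) {M : Matrix k k ℝ} (hM : M.IsSymm)
    (hM_det : IsUnit M.det) :
    let W' := (2 : ℝ) • (M⁻¹ * W * A - W)
    let M' := (2 : ℝ) • (M⁻¹ * W * A * Wᵀ * M⁻¹ - M)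
    W * W'ᵀ + W' * Wᵀ - (M * M' + M' * M) = (-4 : ℝ) • (W * Wᵀ - M * M) := by
  intro W' M'
  simp only [W', M', Matrix.transpose_smul, Matrix.transpose_sub, Matrix.transpose_mul,
    hA.eq, hM.inv.eq]
  simp only [Matrix.smul_mul, Matrix.mul_smul, Matrix.sub_mul, Matrix.mul_sub, Matrix.mul_assoc,
    Matrix.nonsing_inv_mul _ hM_det, Matrix.mul_nonsing_inv_cancel_left _ _ hM_det, Matrix.mul_one]
  module

theorem IsSynSol.hasDerivWithinAt_mul_transpose_sub_mul_self {k n : ℕ}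
    {A : Matrix (Fin n) (Fin n) ℝ} (hA : A.IsSymm) {W : ℝ → Matrix (Fin k) (Fin n) ℝ}
    {M : ℝ → Matrix (Fin k) (Fin k) ℝ} (hsol : IsSynSol A (1/2 : ℝ) W M) {t : ℝ} (ht : 0 ≤ t) :
    HasDerivWithinAt (fun u => W u * (W u)ᵀ - M u * M u)
      ((-4 : ℝ) • (W t * (W t)ᵀ - M t * M t)) (Set.Ici 0) t := by
  obtain ⟨hM, hW', hM'⟩ := hsol t ht
  rw [one_div, inv_inv] at hM'
  rw [← synaptic_deriv_mul_transpose_sub_mul_self hA (W t)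
    (isHermitian_iff_isSymm.mp hM.isHermitian) hM.det_pos.ne'.isUnit]
  exact (hW'.matrix_mul hW'.matrix_transpose).sub (hM'.matrix_mul hM')

theorem orthonormal_filters_invariant_general {k n : ℕ}
    (A : Matrix (Fin n) (Fin n) ℝ) (hA : A.PosDef)
    (W₀ : Matrix (Fin k) (Fin n) ℝ) (M₀ : Matrix (Fin k) (Fin k) ℝ) (hM₀ : M₀.PosDef)
    (hO : M₀⁻¹ * (W₀ * W₀ᵀ) * M₀⁻¹ = (1 : Matrix (Fin k) (Fin k) ℝ))
    (W : ℝ → Matrix (Fin k) (Fin n) ℝ) (M : ℝ → Matrix (Fin k) (Fin k) ℝ)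
    (hsol : IsSynSol A (1/2 : ℝ) W M) (hW0 : W 0 = W₀) (hM0 : M 0 = M₀) :
    ∀ t : ℝ, 0 ≤ t →
      (M t)⁻¹ * (W t * (W t)ᵀ) * (M t)⁻¹ = (1 : Matrix (Fin k) (Fin k) ℝ) := by
  have hA_symm : A.IsSymm := isHermitian_iff_isSymm.mp hA.isHermitian
  have h_defect_zero : ∀ t, 0 ≤ t → W t * (W t)ᵀ - M t * M t = 0 := by
    refine eq_zero_of_hasDerivWithinAt_smul_self
      (fun t ht => hsol.hasDerivWithinAt_mul_transpose_sub_mul_self hA_symm ht) ?_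
    rw [hW0, hM0, sub_eq_zero, ← Matrix.inv_mul_mul_inv_eq_one_iff hM₀.det_pos.ne'.isUnit]
    exact hO
  intro t ht
  rw [Matrix.inv_mul_mul_inv_eq_one_iff (hsol t ht).1.det_pos.ne'.isUnit]
  exact sub_eq_zero.mp (h_defect_zero t ht)

/-- The set `O = {(W, M) ∈ D : M⁻¹WWᵀM⁻¹ = I}` of orthonormal neural filters is
forward invariant under the flow of the synaptic ODE with `τ = 1/2`. -/
theorem orthonormal_filters_invariant {k n : ℕ} (hk : 0 < k) (hkn : k < n)
    (A : Matrix (Fin n) (Fin n) ℝ) (hA : A.PosDef)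
    (W₀ : Matrix (Fin k) (Fin n) ℝ) (M₀ : Matrix (Fin k) (Fin k) ℝ) (hM₀ : M₀.PosDef)
    (hO : M₀⁻¹ * (W₀ * W₀ᵀ) * M₀⁻¹ = (1 : Matrix (Fin k) (Fin k) ℝ))
    (W : ℝ → Matrix (Fin k) (Fin n) ℝ) (M : ℝ → Matrix (Fin k) (Fin k) ℝ)
    (hsol : IsSynSol A (1/2 : ℝ) W M) (hW0 : W 0 = W₀) (hM0 : M 0 = M₀) :
    ∀ t : ℝ, 0 ≤ t →
      (M t)⁻¹ * (W t * (W t)ᵀ) * (M t)⁻¹ = (1 : Matrix (Fin k) (Fin k) ℝ) :=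
  orthonormal_filters_invariant_general A hA W₀ M₀ hM₀ hO W M hsol hW0 hM0
end

section
/- Let (W(t), M(t)) be a solution of the synaptic ODE with timescale τ = 1/2 and initial condition (W₀, M₀) ∈ D, and suppose K := sup_{t ≥ 0} ‖M(t)⁻¹‖ is finite. Then for all t ≥ 0, ‖M(t)⁻¹W(t)W(t)ᵀM(t)⁻¹ − I_k‖² ≤ K⁴ · e^{−8t} · ‖W₀W₀ᵀ − M₀²‖². -/
open Matrix Filter
open scoped Matrix

attribute [local instance] Matrix.frobeniusNormedAddCommGroup Matrix.frobeniusNormedSpace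

/-!
For `τ = 1/2` the defect `E = W Wᵀ - M²` satisfies the closed linear equation `E' = -4 E`: all
terms involving `A` cancel, because `A` and `M` are symmetric. Hence `E t = e^{-4t} E 0`, and
`M⁻¹ W Wᵀ M⁻¹ - 1 = M⁻¹ E M⁻¹` is bounded by submultiplicativity of the Frobenius norm.
-/

theorem eq_exp_mul_smul_of_hasDerivWithinAt_Ici {E : Type*} [NormedAddCommGroup E]
    [NormedSpace ℝ E] {f : ℝ → E} {c a : ℝ}
    (hf : ∀ t, a ≤ t → HasDerivWithinAt f (c • f t) (Set.Ici a) t) {t : ℝ} (ht : a ≤ t) :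
    f t = Real.exp (c * (t - a)) • f a := by
  set g : ℝ → E := fun s => Real.exp (-c * (s - a)) • f s
  have hg : ∀ s, a ≤ s → HasDerivWithinAt g 0 (Set.Ici a) s := by
    intro s hs
    have hexp : HasDerivAt (fun s => Real.exp (-c * (s - a)))
        (Real.exp (-c * (s - a)) * -c) s := by
      simpa using ((hasDerivAt_id s).sub_const a).const_mul (-c) |>.exp
    refine (hexp.hasDerivWithinAt.smul (hf s hs)).congr_deriv ?_
    rw [smul_smul, ← add_smul, mul_neg, add_neg_cancel, zero_smul]
  have hconst := constant_of_has_deriv_right_zero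
    (fun s hs => (hg s hs.1).continuousWithinAt.mono Set.Icc_subset_Ici_self)
    (fun s hs => (hg s hs.1).mono (Set.Ici_subset_Ici.2 hs.1)) t ⟨ht, le_rfl⟩
  simp only [g, sub_self, mul_zero, Real.exp_zero, one_smul] at hconst
  rw [← hconst, smul_smul, ← Real.exp_add, neg_mul, add_neg_cancel, Real.exp_zero, one_smul]

section MatrixCalculus

variable {l m p : Type*} [Fintype l] [Fintype m] [Fintype p]

noncomputable def Matrix.mulCLM : Matrix l m ℝ →L[ℝ] Matrix m p ℝ →L[ℝ] Matrix l p ℝ :=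
  (LinearMap.mk₂ ℝ (· * ·) Matrix.add_mul (fun c A B => Matrix.smul_mul c A B) Matrix.mul_add
    (fun c A B => Matrix.mul_smul A c B)).mkContinuous₂ 1
    (fun A B => by simpa using Matrix.frobenius_norm_mul A B)

-- These statements use the product topology on matrices, as `IsSynSol` does; the proofs go through
-- the Frobenius norm, whose topology is definitionally the same.
theorem HasDerivWithinAt.matrix_mul_s4 {u : ℝ → Matrix l m ℝ} {v : ℝ → Matrix m p ℝ}
    {u' : Matrix l m ℝ} {v' : Matrix m p ℝ} {s : Set ℝ} {x : ℝ}
    (hu : HasDerivWithinAt u u' s x) (hv : HasDerivWithinAt v v' s x) :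
    HasDerivWithinAt (fun t => u t * v t) (u' * v x + u x * v') s x := by
  rw [add_comm]
  exact Matrix.mulCLM.hasDerivWithinAt_of_bilinear hu hv

theorem HasDerivWithinAt.matrix_transpose_s4 {u : ℝ → Matrix l m ℝ} {u' : Matrix l m ℝ}
    {s : Set ℝ} {x : ℝ} (hu : HasDerivWithinAt u u' s x) :
    HasDerivWithinAt (fun t => (u t)ᵀ) u'ᵀ s x :=
  (Matrix.transposeLinearEquiv l m ℝ ℝ).toLinearMap.toContinuousLinearMap.hasFDerivAt
    |>.comp_hasDerivWithinAt x hu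

end MatrixCalculus

section SynapticAlgebra

variable {l m : Type*} [Fintype l] [DecidableEq l] [Fintype m]

theorem Matrix.nonsing_inv_mul_mul_nonsing_inv_sub_one {M : Matrix l l ℝ} (hM : IsUnit M.det)
    (N : Matrix l l ℝ) : M⁻¹ * N * M⁻¹ - 1 = M⁻¹ * (N - M * M) * M⁻¹ := by
  rw [Matrix.mul_sub, Matrix.sub_mul, Matrix.nonsing_inv_mul_cancel_left _ _ hM,
    Matrix.mul_nonsing_inv _ hM]

theorem synaptic_defect_deriv_eq {M : Matrix l l ℝ} {W : Matrix l m ℝ} {A : Matrix m m ℝ}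
    (hM : IsUnit M.det) (hMsymm : M.IsSymm) (hA : A.IsSymm) :
    let W' := (2 : ℝ) • (M⁻¹ * W * A - W)
    let M' := (2 : ℝ) • (M⁻¹ * W * A * Wᵀ * M⁻¹ - M)
    W' * Wᵀ + W * W'ᵀ - (M' * M + M * M') = (-4 : ℝ) • (W * Wᵀ - M * M) := by
  intro W' M'
  have hMinv : (M⁻¹)ᵀ = M⁻¹ := by rw [transpose_nonsing_inv, hMsymm.eq]
  simp only [W', M', transpose_smul, transpose_sub, transpose_mul, hA.eq, hMinv,
    Matrix.smul_mul, Matrix.mul_smul, Matrix.sub_mul, Matrix.mul_sub, Matrix.mul_assoc,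
    mul_nonsing_inv_cancel_left _ _ hM, nonsing_inv_mul _ hM, Matrix.mul_one]
  module

end SynapticAlgebra

theorem IsSynSol.hasDerivWithinAt_defect {k n : ℕ} {A : Matrix (Fin n) (Fin n) ℝ}
    {W : ℝ → Matrix (Fin k) (Fin n) ℝ} {M : ℝ → Matrix (Fin k) (Fin k) ℝ}
    (hsol : IsSynSol A (1/2 : ℝ) W M) (hA : A.IsSymm) {t : ℝ} (ht : 0 ≤ t) :
    HasDerivWithinAt (fun s => W s * (W s)ᵀ - M s * M s)
      ((-4 : ℝ) • (W t * (W t)ᵀ - M t * M t)) (Set.Ici 0) t := by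
  obtain ⟨hM, hW', hM'⟩ := hsol t ht
  rw [one_div, inv_inv] at hM'
  have hMsymm : (M t).IsSymm := isHermitian_iff_isSymm.1 hM.isHermitian
  rw [← synaptic_defect_deriv_eq hM.det_pos.ne'.isUnit hMsymm hA]
  exact (hW'.matrix_mul_s4 hW'.matrix_transpose_s4).sub (hM'.matrix_mul_s4 hM')

theorem dist_to_orthonormal_manifold_bound_general {k n : ℕ}
    (A : Matrix (Fin n) (Fin n) ℝ) (hA : A.PosDef)
    (W₀ : Matrix (Fin k) (Fin n) ℝ) (M₀ : Matrix (Fin k) (Fin k) ℝ)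
    (W : ℝ → Matrix (Fin k) (Fin n) ℝ) (M : ℝ → Matrix (Fin k) (Fin k) ℝ)
    (hsol : IsSynSol A (1/2 : ℝ) W M) (hW0 : W 0 = W₀) (hM0 : M 0 = M₀)
    (K : ℝ) (hK : ∀ t : ℝ, 0 ≤ t → ‖(M t)⁻¹‖ ≤ K) :
    ∀ t : ℝ, 0 ≤ t →
      ‖(M t)⁻¹ * (W t * (W t)ᵀ) * (M t)⁻¹ - 1‖ ^ 2 ≤
        K ^ 4 * Real.exp (-8 * t) * ‖W₀ * W₀ᵀ - M₀ * M₀‖ ^ 2 := by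
  intro t ht
  have hdefect : W t * (W t)ᵀ - M t * M t = Real.exp (-4 * t) • (W₀ * W₀ᵀ - M₀ * M₀) := by
    simpa [hW0, hM0] using eq_exp_mul_smul_of_hasDerivWithinAt_Ici
      (fun s hs => hsol.hasDerivWithinAt_defect (isHermitian_iff_isSymm.1 hA.isHermitian) hs) ht
  have hMinv : ‖(M t)⁻¹‖ ≤ K := hK t ht
  have hK0 : 0 ≤ K := (norm_nonneg _).trans hMinv
  rw [Matrix.nonsing_inv_mul_mul_nonsing_inv_sub_one (hsol t ht).1.det_pos.ne'.isUnit, hdefect]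
  calc ‖(M t)⁻¹ * (Real.exp (-4 * t) • (W₀ * W₀ᵀ - M₀ * M₀)) * (M t)⁻¹‖ ^ 2
      ≤ (‖(M t)⁻¹‖ * (Real.exp (-4 * t) * ‖W₀ * W₀ᵀ - M₀ * M₀‖) * ‖(M t)⁻¹‖) ^ 2 := by
        gcongr
        refine (frobenius_norm_mul _ _).trans ?_
        gcongr
        refine (frobenius_norm_mul _ _).trans ?_
        rw [norm_smul, Real.norm_of_nonneg (Real.exp_pos _).le]
    _ ≤ (K * (Real.exp (-4 * t) * ‖W₀ * W₀ᵀ - M₀ * M₀‖) * K) ^ 2 := by gcongr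
    _ = K ^ 4 * Real.exp (-8 * t) * ‖W₀ * W₀ᵀ - M₀ * M₀‖ ^ 2 := by
        rw [show -8 * t = -4 * t + -4 * t by ring, Real.exp_add]
        ring

/-- If `K` bounds `sup_{t ≥ 0} ‖M(t)⁻¹‖` (Frobenius norm), then for all `t ≥ 0`,
`‖M(t)⁻¹W(t)W(t)ᵀM(t)⁻¹ − I‖² ≤ K⁴·e^{−8t}·‖W₀W₀ᵀ − M₀²‖²`. -/
theorem dist_to_orthonormal_manifold_bound {k n : ℕ} (hk : 0 < k) (hkn : k < n)
    (A : Matrix (Fin n) (Fin n) ℝ) (hA : A.PosDef)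
    (W₀ : Matrix (Fin k) (Fin n) ℝ) (M₀ : Matrix (Fin k) (Fin k) ℝ) (hM₀ : M₀.PosDef)
    (W : ℝ → Matrix (Fin k) (Fin n) ℝ) (M : ℝ → Matrix (Fin k) (Fin k) ℝ)
    (hsol : IsSynSol A (1/2 : ℝ) W M) (hW0 : W 0 = W₀) (hM0 : M 0 = M₀)
    (K : ℝ) (hK : ∀ t : ℝ, 0 ≤ t → ‖(M t)⁻¹‖ ≤ K) :
    ∀ t : ℝ, 0 ≤ t →
      ‖(M t)⁻¹ * (W t * (W t)ᵀ) * (M t)⁻¹ - 1‖ ^ 2 ≤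
        K ^ 4 * Real.exp (-8 * t) * ‖W₀ * W₀ᵀ - M₀ * M₀‖ ^ 2 :=
  dist_to_orthonormal_manifold_bound_general A hA W₀ M₀ W M hsol hW0 hM0 K hK
end
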